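/- arXiv:2305.06763 — 5 statements merged into one kernel-verified Lean document; each statement's English description precedes it below -/
import Mathlib

section
/- Let n, t, s be positive natural numbers. For j = 1, …, s let f_j : {0,1}^t → {0,1} be Boolean functions, and let F_j : (BitVec n)^t → BitVec n be their bitwise lifts, i.e., for every input tuple x and every bit position i < n, the i-th bit of F_j(x) equals f_j applied to the tuple of i-th bits of the components of x. Let a_1, …, a_s ∈ BitVec n be constants and define the linear MBA e(x) = Σ_{j=1}^s a_j * F_j(x), with multiplication and addition taken modulo 2^n. Then e(x) = 0 for all x ∈ (BitVec n)^t if and only if for every Boolean assignment b ∈ {0,1}^t the sum Σ_{j=1}^s a_j * (f_j(b) interpreted as the word 0 or 1 in BitVec n) equals 0 in BitVec n. -/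
/-!
Bitwise lifts commute with broadcasting: if every input word is `0` or `-1` (all bits equal to
`b k`), a bitwise lift returns `0` or `-1` according to `f b`, so the MBA evaluates to minus the
Boolean sum at `b`; this gives the forward direction. Conversely, splitting each `F j x` into its
bits `2 ^ i * [f j (bits i of x)]` rewrites the MBA as `∑ i, 2 ^ i * (Boolean sum at the i-th bit
slice of x)`, which vanishes term by term.
-/

open Finset

theorem Nat.sum_range_two_pow_mul_testBit (m n : ℕ) :
    ∑ i ∈ range n, 2 ^ i * (m.testBit i).toNat = m % 2 ^ n := by
  induction n with
  | zero => simp [Nat.mod_one]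
  | succ n ih =>
    rw [sum_range_succ, ih, Nat.mod_pow_succ, Nat.testBit_eq_decide_div_mod_eq]
    rcases Nat.mod_two_eq_zero_or_one (m / 2 ^ n) with h | h <;> simp [h]

namespace BitVec

variable {n : ℕ}

theorem eq_sum_two_pow_mul_getLsbD (v : BitVec n) :
    v = ∑ i ∈ range n, 2 ^ i * (if v.getLsbD i then 1 else 0) := by
  have hcast : ∑ i ∈ range n, 2 ^ i * (if v.getLsbD i then 1 else 0)
      = ((∑ i ∈ range n, 2 ^ i * (v.toNat.testBit i).toNat : ℕ) : BitVec n) := by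
    push_cast
    refine sum_congr rfl fun i _ => ?_
    cases h : v.toNat.testBit i <;> simp [getLsbD, h]
  rw [hcast, Nat.sum_range_two_pow_mul_testBit, Nat.mod_eq_of_lt v.isLt, natCast_eq_ofNat,
    ofNat_toNat, setWidth_eq]

theorem fill_eq_neg_ite (c : Bool) : fill n c = -(if c then 1 else 0) := by
  cases c <;> simp [fill]

theorem eq_fill_of_getLsbD_eq {v : BitVec n} {c : Bool} (h : ∀ i < n, v.getLsbD i = c) :
    v = fill n c :=
  eq_of_getLsbD_eq fun i hi => by rw [h i hi, getLsbD_fill, decide_eq_true hi, Bool.and_true]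

end BitVec

def IsBitwiseLift {ι : Type*} {n : ℕ} (f : (ι → Bool) → Bool)
    (F : (ι → BitVec n) → BitVec n) : Prop :=
  ∀ (x : ι → BitVec n) (i : ℕ), i < n → (F x).getLsbD i = f (fun k => (x k).getLsbD i)

namespace IsBitwiseLift

open BitVec

variable {ι : Type*} {n : ℕ} {f : (ι → Bool) → Bool} {F : (ι → BitVec n) → BitVec n}

theorem apply_fill (hF : IsBitwiseLift f F) (b : ι → Bool) :
    F (fun k => fill n (b k)) = fill n (f b) :=
  eq_fill_of_getLsbD_eq fun i hi => by
    rw [hF _ i hi]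
    congr
    funext k
    rw [getLsbD_fill, decide_eq_true hi, Bool.and_true]

theorem eq_sum_two_pow_mul (hF : IsBitwiseLift f F) (x : ι → BitVec n) :
    F x = ∑ i ∈ range n, 2 ^ i * (if f (fun k => (x k).getLsbD i) then 1 else 0) := by
  conv_lhs => rw [eq_sum_two_pow_mul_getLsbD (F x)]
  exact sum_congr rfl fun i hi => by rw [hF x i (mem_range.mp hi)]

end IsBitwiseLift

section LinearMBA

variable {ι σ : Type*} [Fintype σ] {n : ℕ} {f : σ → (ι → Bool) → Bool}
  {F : σ → (ι → BitVec n) → BitVec n}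

theorem linearMBA_apply_fill (hF : ∀ j, IsBitwiseLift (f j) (F j)) (a : σ → BitVec n)
    (b : ι → Bool) :
    ∑ j, a j * F j (fun k => BitVec.fill n (b k)) = -∑ j, a j * (if f j b then 1 else 0) := by
  rw [← sum_neg_distrib]
  exact sum_congr rfl fun j _ => by rw [(hF j).apply_fill, BitVec.fill_eq_neg_ite, mul_neg]

theorem linearMBA_eq_sum_two_pow_mul (hF : ∀ j, IsBitwiseLift (f j) (F j)) (a : σ → BitVec n)
    (x : ι → BitVec n) :
    ∑ j, a j * F j x = ∑ i ∈ range n, 2 ^ i *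
      ∑ j, a j * (if f j (fun k => (x k).getLsbD i) then 1 else 0) := by
  simp only [(hF _).eq_sum_two_pow_mul x, mul_sum]
  rw [sum_comm]
  exact sum_congr rfl fun i _ => sum_congr rfl fun j _ => mul_left_comm _ _ _

end LinearMBA

theorem linear_mba_zero_iff_zero_on_bool_general
    (n t s : ℕ)
    (f : Fin s → (Fin t → Bool) → Bool)
    (F : Fin s → (Fin t → BitVec n) → BitVec n)
    (hF : ∀ (j : Fin s) (x : Fin t → BitVec n) (i : ℕ), i < n →
      (F j x).getLsbD i = f j (fun k => (x k).getLsbD i))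
    (a : Fin s → BitVec n) :
    (∀ x : Fin t → BitVec n, (∑ j, a j * F j x) = 0) ↔
      (∀ b : Fin t → Bool,
        (∑ j, a j * (if f j b then (1 : BitVec n) else 0)) = 0) := by
  constructor
  · intro h b
    simpa only [linearMBA_apply_fill hF, neg_eq_zero] using h fun k => BitVec.fill n (b k)
  · intro h x
    rw [linearMBA_eq_sum_two_pow_mul hF]
    exact sum_eq_zero fun i _ => by rw [h, mul_zero]

/-- **Zhou et al.'s theorem (Theorem 1).**
Let `n, t, s` be positive, `f j : {0,1}^t → {0,1}` Boolean functions and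
`F j : (BitVec n)^t → BitVec n` their bitwise lifts (each bit `i < n` of `F j x`
equals `f j` applied to the `i`-th bits of the components of `x`).  For constants
`a j ∈ BitVec n`, the linear MBA `e x = Σ_j a j * F j x` vanishes identically iff
`Σ_j a j * (f j b : BitVec n)` vanishes for every Boolean assignment `b ∈ {0,1}^t`. -/
theorem linear_mba_zero_iff_zero_on_bool
    (n t s : ℕ) (hn : 0 < n) (ht : 0 < t) (hs : 0 < s)
    (f : Fin s → (Fin t → Bool) → Bool)
    (F : Fin s → (Fin t → BitVec n) → BitVec n)
    (hF : ∀ (j : Fin s) (x : Fin t → BitVec n) (i : ℕ), i < n →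
      (F j x).getLsbD i = f j (fun k => (x k).getLsbD i))
    (a : Fin s → BitVec n) :
    (∀ x : Fin t → BitVec n, (∑ j, a j * F j x) = 0) ↔
      (∀ b : Fin t → Bool,
        (∑ j, a j * (if f j b then (1 : BitVec n) else 0)) = 0) :=
  linear_mba_zero_iff_zero_on_bool_general n t s f F hF a
end

section
/- For every n ∈ ℕ and all a, b, X ∈ BitVec n such that a and b are bitwise disjoint (i.e., a & b = 0), the identity (a | X) + (b | X) = ((a + b) | X) + X holds, where arithmetic is modulo 2^n. -/
/-! Both sides reduce to sums of bitwise disjoint pieces, on which addition is bitwise or: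
`x ||| X = (x &&& ~~~X) + X`, and masking with `~~~X` is additive on the disjoint pair `a, b`.
Both sides then equal `(a &&& ~~~X) + (b &&& ~~~X) + X + X`. -/

namespace BitVec

variable {n : ℕ}

theorem or_eq_and_not_add (x y : BitVec n) : x ||| y = (x &&& ~~~y) + y := by
  have hdisj : (x &&& ~~~y) &&& y = 0#n := by
    rw [BitVec.and_assoc, not_and_self, ofNat_eq_ofNat, and_zero]
  rw [add_eq_or_of_and_eq_zero _ _ hdisj]
  ext i
  simp only [getElem_or, getElem_and, getElem_not]
  grind

theorem add_and_of_and_eq_zero {a b : BitVec n} (hab : a &&& b = 0) (c : BitVec n) :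
    (a + b) &&& c = (a &&& c) + (b &&& c) := by
  have hdisj : (a &&& c) &&& (b &&& c) = 0#n := by
    calc (a &&& c) &&& (b &&& c) = (a &&& b) &&& c := by ac_rfl
      _ = 0#n := by rw [hab, ofNat_eq_ofNat, zero_and]
  rw [add_eq_or_of_and_eq_zero _ _ hab, add_eq_or_of_and_eq_zero _ _ hdisj, and_or_distrib_right]

end BitVec

/-- For bitwise disjoint constants `a, b`: `(a | X) + (b | X) = ((a + b) | X) + X`. -/
theorem or_add_or_of_disjoint (n : ℕ) (a b X : BitVec n) (hab : a &&& b = 0) :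
    (a ||| X) + (b ||| X) = ((a + b) ||| X) + X := by
  rw [BitVec.or_eq_and_not_add a, BitVec.or_eq_and_not_add b, BitVec.or_eq_and_not_add (a + b),
    BitVec.add_and_of_and_eq_zero hab]
  ring
end

section
/- For every n ∈ ℕ and all a, b, X ∈ BitVec n such that a and b are bitwise disjoint (i.e., a & b = 0), the identity (a ^ X) + (b ^ X) = 2*((~(a + b)) & X) + a + b holds, where ^ denotes bitwise xor and arithmetic is modulo 2^n. -/
/-!
Carry-save identity: `x + y = (x ^^^ y) + 2 * (x &&& y)`, since `x ^^^ y` is the carry-free sum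
and `x &&& y` marks the positions that carry. Apply it to `x = a ^^^ X`, `y = b ^^^ X`: the `X`
cancels in the xor, and as `a`, `b` are disjoint, `a ^^^ b = a ||| b = a + b`, while bitwise
`(a ^^^ X) &&& (b ^^^ X)` is `X` where `a` and `b` both vanish and `0` elsewhere.
-/

namespace BitVec

variable {n : ℕ}

theorem and_not_add_and (x y : BitVec n) : (x &&& ~~~y) + (x &&& y) = x := by
  rw [add_eq_or_of_and_eq_zero]
  · ext i
    simp only [getElem_or, getElem_and, getElem_not]
    cases x[i] <;> cases y[i] <;> rfl
  · ext i
    simp only [getElem_and, getElem_not]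
    cases x[i] <;> cases y[i] <;> simp

theorem and_not_add_and_not (x y : BitVec n) : (x &&& ~~~y) + (y &&& ~~~x) = x ^^^ y := by
  rw [add_eq_or_of_and_eq_zero]
  · ext i
    simp only [getElem_or, getElem_and, getElem_not, getElem_xor]
    cases x[i] <;> cases y[i] <;> rfl
  · ext i
    simp only [getElem_and, getElem_not]
    cases x[i] <;> cases y[i] <;> simp

theorem add_eq_xor_add_two_mul_and (x y : BitVec n) : x + y = (x ^^^ y) + 2 * (x &&& y) :=
  calc x + y = ((x &&& ~~~y) + (x &&& y)) + ((y &&& ~~~x) + (x &&& y)) := by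
        rw [and_not_add_and, BitVec.and_comm x y, and_not_add_and]
    _ = (x &&& ~~~y) + (y &&& ~~~x) + 2 * (x &&& y) := by ring
    _ = (x ^^^ y) + 2 * (x &&& y) := by rw [and_not_add_and_not]

theorem xor_xor_xor_cancel_right (x y z : BitVec n) : (x ^^^ z) ^^^ (y ^^^ z) = x ^^^ y := by
  ext i
  simp only [getElem_xor]
  cases x[i] <;> cases y[i] <;> cases z[i] <;> rfl

theorem xor_and_xor_of_and_eq_zero {a b : BitVec n} (hab : a &&& b = 0) (x : BitVec n) :
    (a ^^^ x) &&& (b ^^^ x) = ~~~(a ||| b) &&& x := by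
  ext i
  have hi : (a &&& b)[i] = false := by simp [hab]
  revert hi
  simp only [getElem_and, getElem_xor, getElem_not, getElem_or]
  cases a[i] <;> cases b[i] <;> cases x[i] <;> simp

end BitVec

/-- For bitwise disjoint constants `a, b`:
`(a ^ X) + (b ^ X) = 2((~(a + b)) & X) + a + b`. -/
theorem xor_add_xor_of_disjoint (n : ℕ) (a b X : BitVec n) (hab : a &&& b = 0) :
    (a ^^^ X) + (b ^^^ X) = 2 * ((~~~(a + b)) &&& X) + a + b := by
  have hxor : a ^^^ b = a + b := by
    simpa [hab] using (BitVec.add_eq_xor_add_two_mul_and a b).symm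
  have hor : a ||| b = a + b := (BitVec.add_eq_or_of_and_eq_zero a b hab).symm
  rw [BitVec.add_eq_xor_add_two_mul_and, BitVec.xor_xor_xor_cancel_right, hxor,
    BitVec.xor_and_xor_of_and_eq_zero hab, hor]
  ring
end

section
/- For every n ∈ ℕ and all a, b, X ∈ BitVec n such that a and b are bitwise disjoint (i.e., a & b = 0), the identity (a | X) - (b & X) = ((~(a + b)) & X) + a holds, where arithmetic is modulo 2^n. -/
/-!
Disjointness makes `a + b = a ||| b`. Both `a ||| X = a + (~~~a &&& X)` and
`~~~a &&& X = (~~~(a ||| b) &&& X) + (b &&& X)` are sums of bitwise disjoint terms, hence carry-free,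
and substituting them leaves a ring identity in `BitVec n`.
-/

namespace BitVec

variable {w : ℕ}

theorem or_eq_add_not_and (a x : BitVec w) : a ||| x = a + (~~~a &&& x) := by
  rw [add_eq_or_of_and_eq_zero] <;> ext i <;>
    simp only [getElem_or, getElem_and, getElem_not, getElem_zero] <;>
    cases a[i] <;> cases x[i] <;> rfl

theorem not_and_eq_add_of_and_eq_zero {a b : BitVec w} (hab : a &&& b = 0) (x : BitVec w) :
    ~~~a &&& x = (~~~(a ||| b) &&& x) + (b &&& x) := by
  rw [add_eq_or_of_and_eq_zero] <;> ext i hi <;>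
    have hbit := congrArg (·[i]) hab <;> revert hbit <;>
    simp only [getElem_or, getElem_and, getElem_not, ofNat_eq_ofNat, getElem_zero_ofNat_zero] <;>
    cases a[i] <;> cases b[i] <;> cases x[i] <;> decide

end BitVec

/-- For bitwise disjoint constants `a, b`:
`(a | X) - (b & X) = ((~(a + b)) & X) + a`. -/
theorem or_sub_and_of_disjoint (n : ℕ) (a b X : BitVec n) (hab : a &&& b = 0) :
    (a ||| X) - (b &&& X) = ((~~~(a + b)) &&& X) + a := by
  rw [BitVec.add_eq_or_of_and_eq_zero a b hab, BitVec.or_eq_add_not_and a X,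
    BitVec.not_and_eq_add_of_and_eq_zero hab X]
  ring
end

section
/- For every n ∈ ℕ and all a, b, X ∈ BitVec n such that a and b are bitwise disjoint (i.e., a & b = 0), the identity (a ^ X) - 2*(b & X) = 2*((~(a + b)) & X) - X + a holds, where ^ denotes bitwise xor and arithmetic is modulo 2^n. -/
/-!
Since `a &&& b = 0`, the sum `a + b` is `a ||| b`, and `X` splits as
`(a &&& X) + (b &&& X) + (~~~(a ||| b) &&& X)`. With `a ^^^ X = a + X - 2 * (a &&& X)`
both sides become `a + X - 2 * (a &&& X) - 2 * (b &&& X)`.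
-/

namespace BitVec

variable {w : ℕ}

theorem and_add_not_and (c x : BitVec w) : (c &&& x) + (~~~c &&& x) = x := by
  rw [add_eq_or_of_and_eq_zero] <;> ext i <;> grind

theorem xor_eq_add_sub_two_mul_and (x y : BitVec w) : x ^^^ y = x + y - 2 * (x &&& y) := by
  have hxor : x ^^^ y = (~~~y &&& x) + (~~~x &&& y) := by
    rw [add_eq_or_of_and_eq_zero] <;> ext i <;> grind
  have hx := and_add_not_and y x
  have hy := and_add_not_and x y
  rw [BitVec.and_comm y x] at hx
  linear_combination hxor + hx + hy

theorem or_and_eq_add_of_and_eq_zero {a b : BitVec w} (h : a &&& b = 0) (x : BitVec w) :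
    (a ||| b) &&& x = (a &&& x) + (b &&& x) := by
  rw [add_eq_or_of_and_eq_zero, BitVec.and_or_distrib_right]
  rw [show a &&& x &&& (b &&& x) = (a &&& b) &&& x by ac_rfl, h]
  exact zero_and

end BitVec

/-- For bitwise disjoint constants `a, b`:
`(a ^ X) - 2(b & X) = 2((~(a + b)) & X) - X + a`. -/
theorem xor_sub_two_mul_and_of_disjoint (n : ℕ) (a b X : BitVec n) (hab : a &&& b = 0) :
    (a ^^^ X) - 2 * (b &&& X) = 2 * ((~~~(a + b)) &&& X) - X + a := by
  have hsplit := BitVec.and_add_not_and (a ||| b) X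
  rw [BitVec.or_and_eq_add_of_and_eq_zero hab] at hsplit
  rw [BitVec.add_eq_or_of_and_eq_zero a b hab, BitVec.xor_eq_add_sub_two_mul_and]
  linear_combination -2 * hsplit
end
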